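/- arXiv:2005.07835 — 4 statements merged into one kernel-verified Lean document; each statement's English description precedes it below -/
import Mathlib

section
/- Let k ≥ 2 be an integer and let G be a finite simple graph with Δ(G) ≥ k. If D is a minimum k-dominating set of G and γ_k(G) = γ(G) + k − 2, then the domination number of the induced subgraph G[D] satisfies γ(G[D]) ≥ γ_k(G) − k + 2. -/
/-- `D` is a `k`-dominating set of `G`: every vertex outside `D` has
at least `k` neighbors in `D`. -/
def IsKDomSet {V : Type*} (G : SimpleGraph V) (k : ℕ) (D : Set V) : Prop :=
  ∀ v ∉ D, k ≤ (G.neighborSet v ∩ D).ncard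

/-- The `k`-domination number: minimum cardinality of a `k`-dominating set. -/
noncomputable def kdomNum {V : Type*} (G : SimpleGraph V) (k : ℕ) : ℕ :=
  sInf {n | ∃ D : Set V, IsKDomSet G k D ∧ D.ncard = n}

/-!
Let `S` be a minimum dominating set of `G[D]`. If `γ(G[D]) < γ(G)`, then `D \ S` has at least
`k - 1` vertices; deleting any `k - 1` of them from `D` leaves a dominating set of `G`: a deleted
vertex still has its neighbour in `S`, and a vertex outside `D` had `k` neighbours in `D`. This
dominating set has `γ_k(G) - (k - 1) = γ(G) - 1` vertices, a contradiction.
-/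

section

variable {V : Type*} {G : SimpleGraph V} {k : ℕ} {D S Y : Set V}

theorem isKDomSet_one_iff [Finite V] :
    IsKDomSet G 1 S ↔ ∀ v ∉ S, ∃ w ∈ S, G.Adj v w := by
  refine forall₂_congr fun v _ => ?_
  rw [Nat.one_le_iff_ne_zero, ← Nat.pos_iff_ne_zero, Set.ncard_pos]
  exact exists_congr fun _ => and_comm

theorem kdomNum_le_ncard (hD : IsKDomSet G k D) : kdomNum G k ≤ D.ncard :=
  Nat.sInf_le ⟨D, hD, rfl⟩

theorem exists_isKDomSet_ncard_eq_kdomNum (G : SimpleGraph V) (k : ℕ) :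
    ∃ D, IsKDomSet G k D ∧ D.ncard = kdomNum G k :=
  Nat.sInf_mem (s := {n | ∃ D : Set V, IsKDomSet G k D ∧ D.ncard = n})
    ⟨_, Set.univ, fun _ hv => absurd (Set.mem_univ _) hv, rfl⟩

theorem exists_subset_dominating_ncard_eq_kdomNum_induce [Finite V] (G : SimpleGraph V)
    (D : Set V) :
    ∃ S ⊆ D, (∀ v ∈ D \ S, ∃ w ∈ S, G.Adj v w) ∧ S.ncard = kdomNum (G.induce D) 1 := by
  obtain ⟨S, hS, hcard⟩ := exists_isKDomSet_ncard_eq_kdomNum (G.induce D) 1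
  refine ⟨Subtype.val '' S, Subtype.coe_image_subset D S, ?_, ?_⟩
  · rintro v ⟨hvD, hvS⟩
    obtain ⟨w, hwS, hvw⟩ :=
      isKDomSet_one_iff.mp hS ⟨v, hvD⟩ fun h => hvS ⟨_, h, rfl⟩
    exact ⟨w, ⟨w, hwS, rfl⟩, hvw⟩
  · rwa [Set.ncard_image_of_injective _ Subtype.val_injective]

theorem IsKDomSet.isKDomSet_one_diff [Finite V] (hD : IsKDomSet G k D) (hSD : S ⊆ D)
    (hSdom : ∀ v ∈ D \ S, ∃ w ∈ S, G.Adj v w) (hY : Y ⊆ D \ S) (hYk : Y.ncard < k) :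
    IsKDomSet G 1 (D \ Y) := by
  rw [isKDomSet_one_iff]
  intro v hv
  by_cases hvD : v ∈ D
  · have hvY : v ∈ Y := by_contra fun hvY => hv ⟨hvD, hvY⟩
    obtain ⟨w, hwS, hvw⟩ := hSdom v (hY hvY)
    exact ⟨w, ⟨hSD hwS, fun hwY => (hY hwY).2 hwS⟩, hvw⟩
  · have hnot : ¬ G.neighborSet v ∩ D ⊆ Y := fun hsub =>
      (hYk.trans_le (hD v hvD)).not_ge (Set.ncard_le_ncard hsub)
    obtain ⟨w, ⟨hvw, hwD⟩, hwY⟩ := Set.not_subset.mp hnot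
    exact ⟨w, ⟨hwD, hwY⟩, hvw⟩

theorem kdomNum_one_add_le_ncard [Finite V] (hk : 1 ≤ k) (hD : IsKDomSet G k D) (hSD : S ⊆ D)
    (hSdom : ∀ v ∈ D \ S, ∃ w ∈ S, G.Adj v w) (hcard : S.ncard + (k - 1) ≤ D.ncard) :
    kdomNum G 1 + (k - 1) ≤ D.ncard := by
  have hdiff : k - 1 ≤ (D \ S).ncard := by
    rw [Set.ncard_sdiff hSD]; omega
  obtain ⟨Y, hY, hYcard⟩ := Set.exists_subset_card_eq hdiff
  have hle := kdomNum_le_ncard (hD.isKDomSet_one_diff hSD hSdom hY (by omega))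
  rw [Set.ncard_sdiff (hY.trans Set.sdiff_subset)] at hle
  have := Set.ncard_le_ncard (hY.trans Set.sdiff_subset)
  omega

end

theorem statement1_general {V : Type*} [Fintype V] (G : SimpleGraph V)
    (k : ℕ) (hk : 2 ≤ k)
    (D : Set V) (hD : IsKDomSet G k D) (hmin : D.ncard = kdomNum G k)
    (heq : kdomNum G k = kdomNum G 1 + (k - 2)) :
    kdomNum G k ≤ kdomNum (G.induce D) 1 + (k - 2) := by
  obtain ⟨S, hSD, hSdom, hScard⟩ := exists_subset_dominating_ncard_eq_kdomNum_induce G D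
  by_contra! hlt
  have := kdomNum_one_add_le_ncard (by omega) hD hSD hSdom (by omega)
  omega

/-- If `D` is a minimum `k`-dominating set of `G` (where `Δ(G) ≥ k ≥ 2`) and
`γ_k(G) = γ(G) + k − 2`, then `γ(G[D]) ≥ γ_k(G) − k + 2`
(stated equivalently as `γ_k(G) ≤ γ(G[D]) + (k − 2)`). -/
theorem statement1 {V : Type*} [Fintype V] (G : SimpleGraph V) [DecidableRel G.Adj]
    (k : ℕ) (hk : 2 ≤ k) (hΔ : k ≤ G.maxDegree)
    (D : Set V) (hD : IsKDomSet G k D) (hmin : D.ncard = kdomNum G k)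
    (heq : kdomNum G k = kdomNum G 1 + (k - 2)) :
    kdomNum G k ≤ kdomNum (G.induce D) 1 + (k - 2) :=
  statement1_general G k hk D hD hmin heq
end

section
/- Let k ≥ 2 be an integer and let G be a finite simple graph with Δ(G) ≥ k. If D is a minimum k-dominating set of G and γ_k(G) = γ(G) + k − 2, then the maximum degree of the induced subgraph G[D] satisfies Δ(G[D]) ≤ k − 2. -/
/-! If some `v ∈ D` had `k - 1` neighbors in `D`, deleting them from `D` would leave a dominating
set: the deleted vertices are dominated by `v`, and every vertex outside `D` keeps at least one of
its `k` neighbors in `D`. That set has `γ_k(G) - (k - 1) = γ(G) - 1` vertices, which is absurd. -/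

section

variable {V : Type*} {G : SimpleGraph V}

theorem kdomNum_le {k : ℕ} {D : Set V} (hD : IsKDomSet G k D) : kdomNum G k ≤ D.ncard :=
  Nat.sInf_le ⟨D, hD, rfl⟩

theorem IsKDomSet.isKDomSet_one_sdiff [Finite V] {k : ℕ} {D S : Set V} {v : V}
    (hD : IsKDomSet G k D) (hv : v ∈ D) (hS : S ⊆ G.neighborSet v) (hSk : S.ncard < k) :
    IsKDomSet G 1 (D \ S) := by
  intro w hw
  by_cases hwD : w ∈ D
  · have hwS : w ∈ S := by by_contra h; exact hw ⟨hwD, h⟩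
    have hvS : v ∉ S := fun h => G.irrefl (hS h)
    exact (Set.ncard_pos).mpr ⟨v, (hS hwS).symm, hv, hvS⟩
  · calc 1 ≤ (G.neighborSet w ∩ D).ncard - S.ncard := by have := hD w hwD; omega
      _ ≤ ((G.neighborSet w ∩ D) \ S).ncard := Set.le_ncard_sdiff _ _
      _ = (G.neighborSet w ∩ (D \ S)).ncard := by rw [Set.inter_sdiff_assoc]

end

theorem statement2_general {V : Type*} [Fintype V] (G : SimpleGraph V)
    (k : ℕ) (hk : 2 ≤ k)
    (D : Set V) (hD : IsKDomSet G k D) (hmin : D.ncard = kdomNum G k)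
    (heq : kdomNum G k = kdomNum G 1 + (k - 2)) :
    ∀ v ∈ D, (G.neighborSet v ∩ D).ncard ≤ k - 2 := by
  intro v hv
  by_contra! hlt
  obtain ⟨S, hS, hScard⟩ :=
    Set.exists_subset_card_eq (show k - 1 ≤ (G.neighborSet v ∩ D).ncard by omega)
  have hdom : IsKDomSet G 1 (D \ S) :=
    hD.isKDomSet_one_sdiff hv (hS.trans Set.inter_subset_left) (by omega)
  have hvS : v ∈ D \ S := ⟨hv, fun h => G.irrefl (hS h).1⟩
  have hγ := kdomNum_le hdom
  have hcard := Set.ncard_sdiff (hS.trans Set.inter_subset_right)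
  -- `v` survives the deletion; this excludes the truncated case `γ(G) = 0`.
  have hpos := (Set.ncard_pos (s := D \ S)).mpr ⟨v, hvS⟩
  omega

/-- If `D` is a minimum `k`-dominating set of `G` (where `Δ(G) ≥ k ≥ 2`) and
`γ_k(G) = γ(G) + k − 2`, then `Δ(G[D]) ≤ k − 2`, i.e. every vertex of `D`
has at most `k − 2` neighbors inside `D`. -/
theorem statement2 {V : Type*} [Fintype V] (G : SimpleGraph V) [DecidableRel G.Adj]
    (k : ℕ) (hk : 2 ≤ k) (hΔ : k ≤ G.maxDegree)
    (D : Set V) (hD : IsKDomSet G k D) (hmin : D.ncard = kdomNum G k)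
    (heq : kdomNum G k = kdomNum G 1 + (k - 2)) :
    ∀ v ∈ D, (G.neighborSet v ∩ D).ncard ≤ k - 2 :=
  statement2_general G k hk D hD hmin heq
end

section
/- Let k ≥ 3 be an integer and let G be a connected bipartite finite simple graph with Δ(G) ≥ k satisfying γ_k(G) = γ(G) + k − 2. Then every minimum k-dominating set D of G is a partite class of G; that is, both D and V(G) \ D are independent sets of vertices. -/
open Set

section

variable {V : Type*} {G : SimpleGraph V} {k : ℕ} {A : Set V}

lemma kdomNum_le_ncard_s4 {E : Set V} (hE : IsKDomSet G k E) : kdomNum G k ≤ E.ncard :=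
  Nat.sInf_le ⟨E, hE, rfl⟩

lemma IsKDomSet.one_of_forall_exists_adj [Finite V] {E : Set V}
    (h : ∀ v ∉ E, ∃ u ∈ E, G.Adj v u) : IsKDomSet G 1 E := fun v hv => by
  obtain ⟨u, huE, hvu⟩ := h v hv
  exact (ncard_pos).2 ⟨u, hvu, huE⟩

theorem kdomNum_one_add_ncard_le [Finite V] {D T X : Set V} (hD : IsKDomSet G k D)
    (hTD : T ⊆ D) (hT : ∀ t ∈ T, ∃ e ∈ (D \ T) ∪ X, G.Adj t e)
    (hsparse : ∀ w ∉ D, w ∉ X → (G.neighborSet w ∩ T).ncard < k) :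
    kdomNum G 1 + T.ncard ≤ D.ncard + X.ncard := by
  have hE : IsKDomSet G 1 ((D \ T) ∪ X) := IsKDomSet.one_of_forall_exists_adj fun w hw => by
    by_cases hwT : w ∈ T
    · exact hT w hwT
    have hwD : w ∉ D := fun h => hw (Or.inl ⟨h, hwT⟩)
    have hwX : w ∉ X := fun h => hw (Or.inr h)
    have hout : ¬ G.neighborSet w ∩ D ⊆ T := fun hsub =>
      (hD w hwD).not_gt <| (ncard_le_ncard (subset_inter inter_subset_left hsub)).trans_lt
        (hsparse w hwD hwX)
    obtain ⟨d, ⟨hwd, hdD⟩, hdT⟩ := not_subset.1 hout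
    exact ⟨d, Or.inl ⟨hdD, hdT⟩, hwd⟩
  calc kdomNum G 1 + T.ncard ≤ ((D \ T) ∪ X).ncard + T.ncard := by
        gcongr; exact kdomNum_le_ncard_s4 hE
    _ ≤ (D \ T).ncard + X.ncard + T.ncard := by gcongr; exact ncard_union_le _ _
    _ = D.ncard + X.ncard := by rw [add_right_comm, ncard_sdiff_add_ncard_of_subset hTD]

theorem kdomNum_one_add_degree_le [Fintype V] [DecidableRel G.Adj] (v : V) :
    kdomNum G 1 + G.degree v ≤ Fintype.card V := by
  -- exchange the neighbourhood of `v`, which `v` keeps dominating, out of the whole vertex set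
  have huniv : IsKDomSet G 0 (univ : Set V) := fun w hw => absurd (mem_univ w) hw
  have h := kdomNum_one_add_ncard_le (X := ∅) huniv (subset_univ (G.neighborSet v))
    (fun t ht => ⟨v, Or.inl ⟨mem_univ v, G.irrefl⟩, G.adj_symm ht⟩)
    (fun w hw => absurd (mem_univ w) hw)
  rwa [ncard_eq_toFinset_card', toFinset_card, G.card_neighborSet_eq_degree,
    ncard_univ, Nat.card_eq_fintype_card, ncard_empty, add_zero] at h

theorem kdomNum_one_add_maxDegree_le [Fintype V] [DecidableRel G.Adj] :
    kdomNum G 1 + G.maxDegree ≤ Fintype.card V := by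
  cases isEmpty_or_nonempty V
  · simpa using kdomNum_le_ncard_s4 (G := G) (k := 1) (E := ∅) fun v => isEmptyElim v
  · obtain ⟨v, hv⟩ := G.exists_maximal_degree_vertex
    exact hv ▸ kdomNum_one_add_degree_le v

lemma disjoint_neighborSet_of_not_iff
    (hA : ∀ u v : V, G.Adj u v → (u ∈ A ↔ v ∉ A)) {x y : V} (hxy : ¬(x ∈ A ↔ y ∈ A)) :
    Disjoint (G.neighborSet x) (G.neighborSet y) :=
  disjoint_left.2 fun d hxd hyd => by
    have := hA x d hxd
    have := hA y d hyd
    tauto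

lemma ncard_neighborSet_inter_union_le [Finite V]
    (hA : ∀ u v : V, G.Adj u v → (u ∈ A ↔ v ∉ A)) {x y : V} (hxy : ¬(x ∈ A ↔ y ∈ A))
    {S S' : Set V} (hS : S ⊆ G.neighborSet x) (hS' : S' ⊆ G.neighborSet y) (w : V) :
    (G.neighborSet w ∩ (S ∪ S')).ncard ≤ max S.ncard S'.ncard := by
  by_cases hw : w ∈ A ↔ x ∈ A
  · have hwS' : Disjoint (G.neighborSet w) S' :=
      (disjoint_neighborSet_of_not_iff hA (by tauto)).mono_right hS'
    calc _ ≤ S.ncard := ncard_le_ncard fun d hd =>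
          hd.2.resolve_right (hwS'.notMem_of_mem_left hd.1)
      _ ≤ _ := le_max_left _ _
  · have hwS : Disjoint (G.neighborSet w) S :=
      (disjoint_neighborSet_of_not_iff hA hw).mono_right hS
    calc _ ≤ S'.ncard := ncard_le_ncard fun d hd =>
          hd.2.resolve_left (hwS.notMem_of_mem_left hd.1)
      _ ≤ _ := le_max_right _ _

theorem kdomNum_one_add_le_of_adj_of_mem [Finite V] (hk : 2 ≤ k)
    (hA : ∀ u v : V, G.Adj u v → (u ∈ A ↔ v ∉ A)) {D : Set V} (hD : IsKDomSet G k D)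
    {x : V} (hx : x ∉ D) {w₀ w₁ : V} (hw₀ : w₀ ∈ D) (hw₁ : w₁ ∈ D) (hadj : G.Adj w₀ w₁) :
    kdomNum G 1 + k ≤ D.ncard + 1 := by
  wlog hside : ¬(x ∈ A ↔ w₁ ∈ A) generalizing w₀ w₁
  · exact this hw₁ hw₀ hadj.symm (by have := hA w₀ w₁ hadj; tauto)
  obtain ⟨S, hSsub, hS⟩ := exists_subset_card_eq (s := (G.neighborSet x ∩ D) \ {w₁}) (n := k - 1)
    (by
      have := pred_ncard_le_ncard_sdiff_singleton (G.neighborSet x ∩ D) w₁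
      have := hD x hx
      omega)
  have hSx : S ⊆ G.neighborSet x := fun s hs => (hSsub hs).1.1
  have hw₀S : w₀ ∉ S := fun h => hside (by have := hA x w₀ (hSx h); have := hA w₀ w₁ hadj; tauto)
  have hw₁S : w₁ ∉ S := fun h => (hSsub h).2 rfl
  have hT : (S ∪ {w₀}).ncard = k := by
    rw [ncard_union_eq (disjoint_singleton_right.2 hw₀S), hS, ncard_singleton]
    omega
  have := kdomNum_one_add_ncard_le (X := {x}) hD
    (union_subset (fun s hs => (hSsub hs).1.2) (singleton_subset_iff.2 hw₀))
    (by
      rintro t (ht | rfl)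
      · exact ⟨x, Or.inr rfl, (hSx ht).symm⟩
      · refine ⟨w₁, Or.inl ⟨hw₁, ?_⟩, hadj⟩
        rintro (h | h)
        exacts [hw₁S h, G.ne_of_adj hadj h.symm])
    (fun w _ _ => (ncard_neighborSet_inter_union_le hA hside hSx
      (singleton_subset_iff.2 hadj.symm) w).trans_lt (by rw [hS, ncard_singleton]; omega))
  rwa [hT, ncard_singleton] at this

theorem kdomNum_one_add_le_of_adj_of_notMem [Finite V] (hk : 1 ≤ k)
    (hA : ∀ u v : V, G.Adj u v → (u ∈ A ↔ v ∉ A)) {D : Set V} (hD : IsKDomSet G k D)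
    {y z : V} (hy : y ∉ D) (hz : z ∉ D) (hyz : G.Adj y z) :
    kdomNum G 1 + 2 * (k - 1) ≤ D.ncard + 2 := by
  have hside : ¬(y ∈ A ↔ z ∈ A) := by have := hA y z hyz; tauto
  obtain ⟨Sy, hSy, hSyk⟩ := exists_subset_card_eq ((Nat.sub_le k 1).trans (hD y hy))
  obtain ⟨Sz, hSz, hSzk⟩ := exists_subset_card_eq ((Nat.sub_le k 1).trans (hD z hz))
  have hSyN : Sy ⊆ G.neighborSet y := hSy.trans inter_subset_left
  have hSzN : Sz ⊆ G.neighborSet z := hSz.trans inter_subset_left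
  have := kdomNum_one_add_ncard_le (X := {y, z}) hD
    (union_subset (hSy.trans inter_subset_right) (hSz.trans inter_subset_right))
    (by
      rintro t (ht | ht)
      · exact ⟨y, Or.inr (Or.inl rfl), (hSyN ht).symm⟩
      · exact ⟨z, Or.inr (Or.inr rfl), (hSzN ht).symm⟩)
    (fun w _ _ => (ncard_neighborSet_inter_union_le hA hside hSyN hSzN w).trans_lt
      (by rw [hSyk, hSzk, max_self]; omega))
  rwa [ncard_union_eq ((disjoint_neighborSet_of_not_iff hA hside).mono hSyN hSzN), hSyk, hSzk,
    ncard_pair (G.ne_of_adj hyz), ← two_mul] at this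

end

theorem statement4_general {V : Type*} [Fintype V] (G : SimpleGraph V) [DecidableRel G.Adj]
    (k : ℕ) (hk : 3 ≤ k) (hΔ : k ≤ G.maxDegree)
    (hbip : ∃ A : Set V, ∀ u v : V, G.Adj u v → (u ∈ A ↔ v ∉ A))
    (heq : kdomNum G k = kdomNum G 1 + (k - 2))
    (D : Set V) (hD : IsKDomSet G k D) (hmin : D.ncard = kdomNum G k) :
    (∀ u ∈ D, ∀ v ∈ D, ¬ G.Adj u v) ∧
    (∀ u ∉ D, ∀ v, v ∉ D → ¬ G.Adj u v) := by
  obtain ⟨A, hA⟩ := hbip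
  rw [heq] at hmin
  refine ⟨fun u hu v hv huv => ?_, fun y hy z hz hyz => ?_⟩
  · by_cases hDuniv : D = univ
    · have := kdomNum_one_add_maxDegree_le (G := G)
      rw [hDuniv, ncard_univ, Nat.card_eq_fintype_card] at hmin
      omega
    · obtain ⟨x, hx⟩ := (ne_univ_iff_exists_notMem D).1 hDuniv
      have := kdomNum_one_add_le_of_adj_of_mem (by omega) hA hD hx hu hv huv
      omega
  · have := kdomNum_one_add_le_of_adj_of_notMem (by omega) hA hD hy hz hyz
    omega

/-- Let `k ≥ 3` and let `G` be a connected bipartite graph with `Δ(G) ≥ k`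
satisfying `γ_k(G) = γ(G) + k − 2`. Then every minimum `k`-dominating set `D`
is a partite class of `G`: both `D` and its complement are independent. -/
theorem statement4 {V : Type*} [Fintype V] (G : SimpleGraph V) [DecidableRel G.Adj]
    (k : ℕ) (hk : 3 ≤ k) (hΔ : k ≤ G.maxDegree) (hconn : G.Connected)
    (hbip : ∃ A : Set V, ∀ u v : V, G.Adj u v → (u ∈ A ↔ v ∉ A))
    (heq : kdomNum G k = kdomNum G 1 + (k - 2))
    (D : Set V) (hD : IsKDomSet G k D) (hmin : D.ncard = kdomNum G k) :
    (∀ u ∈ D, ∀ v ∈ D, ¬ G.Adj u v) ∧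
    (∀ u ∉ D, ∀ v, v ∉ D → ¬ G.Adj u v) :=
  statement4_general G k hk hΔ hbip heq D hD hmin
end

section
/- Let k ≥ 3 and let F be a k-uniform hypergraph of order n having at least one edge. Then tc(F) = n − k + 2 if and only if there is no vertex subset W of F for which the induced subhypergraph H = F[W] satisfies both ρ(H) ≤ k − 1 and α_w(H) ≥ ρ(H) + k − 1 (in particular, H must admit a cover of all its vertices by its edges). -/
/-!
An edge `e` with one of its vertices `v` gives the TC-set `((e \ {v})ᶜ, {e})` of size `n − k + 2`,
and more generally a weakly independent set `S` covered by edges `R` gives the TC-set `(Sᶜ, R)`;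
so a set `W` as in the statement yields `tc(F) ≤ n − k + 1`.

Conversely, take a minimum TC-set `(T, R)` with `|R|` least among minimum ones. Its
complement `S = V \ T` is weakly independent, and `tc(F) ≤ n − k + 1` means `|S| ≥ |R| + k − 1`.
If `|R| ≤ k − 1`, then `W = ⋃ R` works. Otherwise every `e ∈ R` has at least two private vertices
in `S` (vertices in no other edge of `R`): with at most one, moving it into `T` and dropping `e`
from `R` would give a minimum TC-set with fewer edges. Then any `k − 1` edges of `R` span a set
`W` with at least `2(k − 1)` vertices of `S`.
-/

/-- `(T, R)` is a TC-set of the hypergraph with edge family `E`: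
`T` is a transversal (meets every edge) and the edges in `R ⊆ E`
together cover every vertex outside `T`. -/
def IsTCSet {V : Type*} [DecidableEq V] (E : Finset (Finset V))
    (T : Finset V) (R : Finset (Finset V)) : Prop :=
  (∀ e ∈ E, (e ∩ T).Nonempty) ∧ R ⊆ E ∧ ∀ v : V, v ∉ T → ∃ e ∈ R, v ∈ e

/-- The TC-number: the minimum of `|T| + |R|` over all TC-sets `(T, R)`. -/
noncomputable def tcNum {V : Type*} [DecidableEq V] (E : Finset (Finset V)) : ℕ :=
  sInf {n | ∃ T R, IsTCSet E T R ∧ T.card + R.card = n}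

theorem le_card_of_uniform {V : Type*} [Fintype V] {E : Finset (Finset V)} {k : ℕ}
    (huni : ∀ e ∈ E, e.card = k) (hne : E.Nonempty) : k ≤ Fintype.card V :=
  let ⟨e, he⟩ := hne
  huni e he ▸ Finset.card_le_univ e

section TCSets

variable {V : Type*} [DecidableEq V] {E R R₀ : Finset (Finset V)} {T S W : Finset V}

def privatePart (R : Finset (Finset V)) (e : Finset V) : Finset V :=
  e \ (R.erase e).biUnion id

def IsOptimalTCSet (E : Finset (Finset V)) (T : Finset V) (R : Finset (Finset V)) : Prop :=
  IsTCSet E T R ∧ T.card + R.card = tcNum E ∧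
    ∀ T' R', IsTCSet E T' R' → T'.card + R'.card = tcNum E → R.card ≤ R'.card

def IsInducedEdgeCoverNumber (E : Finset (Finset V)) (W : Finset V) (p : ℕ) : Prop :=
  (∃ R ⊆ E.filter (fun e => e ⊆ W), R.card = p ∧ ∀ v ∈ W, ∃ e ∈ R, v ∈ e) ∧
    (∀ R ⊆ E.filter (fun e => e ⊆ W), (∀ v ∈ W, ∃ e ∈ R, v ∈ e) → p ≤ R.card)

theorem IsTCSet.tcNum_le (h : IsTCSet E T R) : tcNum E ≤ T.card + R.card :=
  Nat.sInf_le ⟨T, R, h, rfl⟩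

theorem not_subset_of_disjoint_transversal (hT : ∀ e ∈ E, (e ∩ T).Nonempty)
    (hST : Disjoint S T) {e : Finset V} (he : e ∈ E) : ¬ e ⊆ S := fun heS =>
  Finset.not_disjoint_iff_nonempty_inter.mpr (hT e he) (hST.mono_left heS)

theorem isTCSet_compl [Fintype V] (hS : ∀ e ∈ E, ¬ e ⊆ S) (hR : R ⊆ E)
    (hcov : ∀ v ∈ S, ∃ e ∈ R, v ∈ e) : IsTCSet E Sᶜ R := by
  refine ⟨fun e he => Finset.not_disjoint_iff_nonempty_inter.mp fun hd => hS e he ?_, hR,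
    fun v hv => hcov v (Finset.notMem_compl.mp hv)⟩
  exact disjoint_compl_right_iff.mp hd

theorem IsTCSet.union_privatePart (h : IsTCSet E T R) (e : Finset V) :
    IsTCSet E (T ∪ privatePart R e) (R.erase e) := by
  obtain ⟨hT, hRE, hcov⟩ := h
  refine ⟨fun f hf => (hT f hf).mono (Finset.inter_subset_inter_left Finset.subset_union_left),
    (Finset.erase_subset e R).trans hRE, fun v hv => ?_⟩
  rw [Finset.mem_union, not_or] at hv
  obtain ⟨f, hfR, hvf⟩ := hcov v hv.1
  by_cases hfe : f = e
  · subst hfe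
    have : v ∈ (R.erase f).biUnion id := by
      by_contra hvU
      exact hv.2 (Finset.mem_sdiff.mpr ⟨hvf, hvU⟩)
    simpa using this
  · exact ⟨f, Finset.mem_erase.mpr ⟨hfe, hfR⟩, hvf⟩

theorem exists_isTCSet_card_eq_of_uniform [Fintype V] {k : ℕ} (hk : 0 < k)
    (huni : ∀ e ∈ E, e.card = k) (hne : E.Nonempty) :
    ∃ T R, IsTCSet E T R ∧ T.card + R.card = Fintype.card V - k + 2 := by
  have hkn := le_card_of_uniform huni hne
  obtain ⟨e, he⟩ := hne
  obtain ⟨v, hv⟩ : e.Nonempty := Finset.card_pos.mp (huni e he ▸ hk)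
  have hS : ∀ f ∈ E, ¬ f ⊆ e.erase v := fun f hf hfS => by
    have := Finset.card_le_card hfS
    rw [huni f hf, Finset.card_erase_of_mem hv, huni e he] at this
    omega
  refine ⟨_, {e}, isTCSet_compl hS (Finset.singleton_subset_iff.mpr he)
    fun u hu => ⟨e, Finset.mem_singleton_self e, Finset.mem_of_mem_erase hu⟩, ?_⟩
  rw [Finset.card_compl, Finset.card_erase_of_mem hv, huni e he, Finset.card_singleton]
  omega

theorem exists_isOptimalTCSet (h : ∃ T R, IsTCSet E T R) : ∃ T R, IsOptimalTCSet E T R := by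
  classical
  have hmin : ∃ m, ∃ T R, IsTCSet E T R ∧ T.card + R.card = tcNum E ∧ R.card = m := by
    obtain ⟨T, R, hTR⟩ := h
    obtain ⟨T', R', hTR', hsum⟩ :=
      Nat.sInf_mem (s := {n | ∃ T R, IsTCSet E T R ∧ T.card + R.card = n}) ⟨_, T, R, hTR, rfl⟩
    exact ⟨_, T', R', hTR', hsum, rfl⟩
  obtain ⟨T, R, hTR, hsum, hR⟩ := Nat.find_spec hmin
  exact ⟨T, R, hTR, hsum, fun T' R' h' hs' => hR ▸ Nat.find_min' hmin ⟨T', R', h', hs', rfl⟩⟩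

theorem IsOptimalTCSet.two_le_card_privatePart_sdiff (h : IsOptimalTCSet E T R) {e : Finset V}
    (he : e ∈ R) : 2 ≤ (privatePart R e \ T).card := by
  obtain ⟨hTR, hsum, hmin⟩ := h
  have hTC := hTR.union_privatePart e
  have hcard : (T ∪ privatePart R e).card = T.card + (privatePart R e \ T).card := by
    rw [Finset.union_comm, ← Finset.card_sdiff_add_card, add_comm]
  have hle := hTC.tcNum_le
  have hR := Finset.card_erase_add_one he
  by_contra hlt
  have := hmin _ _ hTC (by omega)
  omega

theorem sum_card_privatePart_sdiff_le (hR₀ : R₀ ⊆ R) (T : Finset V) :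
    ∑ e ∈ R₀, (privatePart R e \ T).card ≤ (R₀.biUnion id \ T).card := by
  rw [← Finset.card_biUnion]
  · refine Finset.card_le_card fun x hx => ?_
    obtain ⟨e, he, hx⟩ := Finset.mem_biUnion.mp hx
    obtain ⟨hxP, hxT⟩ := Finset.mem_sdiff.mp hx
    exact Finset.mem_sdiff.mpr
      ⟨Finset.mem_biUnion.mpr ⟨e, he, (Finset.mem_sdiff.mp hxP).1⟩, hxT⟩
  · intro e he f hf hef
    refine Finset.disjoint_left.mpr fun x hxe hxf => ?_
    have hxf : x ∈ f := (Finset.mem_sdiff.mp (Finset.mem_sdiff.mp hxf).1).1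
    exact (Finset.mem_sdiff.mp (Finset.mem_sdiff.mp hxe).1).2 <|
      Finset.mem_biUnion.mpr ⟨f, Finset.mem_erase.mpr ⟨Ne.symm hef, hR₀ hf⟩, hxf⟩

theorem IsOptimalTCSet.exists_sparse_cover [Fintype V] {k : ℕ} (h : IsOptimalTCSet E T R)
    (htc : tcNum E + k ≤ Fintype.card V + 1) :
    ∃ R₀ ⊆ E, R₀.card ≤ k - 1 ∧ R₀.card + k - 1 ≤ (R₀.biUnion id \ T).card := by
  obtain ⟨⟨-, hRE, hcov⟩, hsum, -⟩ := id h
  by_cases hR : R.card ≤ k - 1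
  · refine ⟨R, hRE, hR, ?_⟩
    have hTc : Tᶜ ⊆ R.biUnion id \ T := fun v hv => by
      obtain ⟨e, he, hve⟩ := hcov v (Finset.mem_compl.mp hv)
      exact Finset.mem_sdiff.mpr ⟨Finset.mem_biUnion.mpr ⟨e, he, hve⟩, Finset.mem_compl.mp hv⟩
    have := Finset.card_le_card hTc
    rw [Finset.card_compl] at this
    omega
  · obtain ⟨R₀, hR₀R, hR₀⟩ := Finset.exists_subset_card_eq (show k - 1 ≤ R.card by omega)
    refine ⟨R₀, hR₀R.trans hRE, hR₀.le, ?_⟩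
    calc R₀.card + k - 1 = ∑ _e ∈ R₀, 2 := by rw [Finset.sum_const, hR₀, smul_eq_mul]; omega
      _ ≤ ∑ e ∈ R₀, (privatePart R e \ T).card :=
        Finset.sum_le_sum fun e he => h.two_le_card_privatePart_sdiff (hR₀R he)
      _ ≤ (R₀.biUnion id \ T).card := sum_card_privatePart_sdiff_le hR₀R T

theorem exists_isInducedEdgeCoverNumber_le (hR : R ⊆ E.filter (fun e => e ⊆ W))
    (hcov : ∀ v ∈ W, ∃ e ∈ R, v ∈ e) : ∃ p ≤ R.card, IsInducedEdgeCoverNumber E W p := by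
  classical
  have h : ∃ p, ∃ R ⊆ E.filter (fun e => e ⊆ W), R.card = p ∧ ∀ v ∈ W, ∃ e ∈ R, v ∈ e :=
    ⟨_, R, hR, rfl, hcov⟩
  exact ⟨Nat.find h, Nat.find_min' h ⟨R, hR, rfl, hcov⟩, Nat.find_spec h,
    fun R' hR' hcov' => Nat.find_min' h ⟨R', hR', rfl, hcov'⟩⟩

theorem exists_induced_of_sparse_cover {k : ℕ} (hR₀ : R₀ ⊆ E) (hR₀k : R₀.card ≤ k - 1)
    (hSW : S ⊆ R₀.biUnion id) (hS : ∀ e ∈ E, ¬ e ⊆ S) (hSc : R₀.card + k - 1 ≤ S.card) :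
    ∃ (W : Finset V) (p : ℕ), IsInducedEdgeCoverNumber E W p ∧ p ≤ k - 1 ∧
      ∃ S ⊆ W, (∀ e ∈ E, e ⊆ W → ¬ e ⊆ S) ∧ p + k - 1 ≤ S.card := by
  have hR₀W : R₀ ⊆ E.filter (fun e => e ⊆ R₀.biUnion id) := fun e he =>
    Finset.mem_filter.mpr ⟨hR₀ he, Finset.subset_biUnion_of_mem id he⟩
  obtain ⟨p, hp, hρ⟩ := exists_isInducedEdgeCoverNumber_le hR₀W fun v hv => by
    simpa using Finset.mem_biUnion.mp hv
  exact ⟨_, p, hρ, by omega, S, hSW, fun e he _ => hS e he, by omega⟩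

end TCSets

/-- Let `k ≥ 3` and let `F` be a `k`-uniform hypergraph of order `n` with at
least one edge. Then `tc(F) = n − k + 2` iff there is no vertex subset `W`
such that the induced subhypergraph `H = F[W]` (whose edges are the edges of
`F` contained in `W`) has edge cover number `ρ(H) ≤ k − 1` (in particular the
edges of `H` cover all of `W`) and admits a weakly independent set of at
least `ρ(H) + k − 1` vertices. -/
theorem statement10 {V : Type*} [Fintype V] [DecidableEq V] (E : Finset (Finset V))
    (k : ℕ) (hk : 3 ≤ k) (huni : ∀ e ∈ E, e.card = k) (hne : E.Nonempty) :
    tcNum E = Fintype.card V - k + 2 ↔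
      ¬ ∃ (W : Finset V) (p : ℕ),
        -- `p` is the edge cover number of the induced subhypergraph `F[W]`
        ((∃ R ⊆ E.filter (fun e => e ⊆ W), R.card = p ∧ ∀ v ∈ W, ∃ e ∈ R, v ∈ e) ∧
          (∀ R ⊆ E.filter (fun e => e ⊆ W), (∀ v ∈ W, ∃ e ∈ R, v ∈ e) → p ≤ R.card)) ∧
        p ≤ k - 1 ∧
        -- `F[W]` has a weakly independent set of at least `p + k − 1` vertices
        (∃ S ⊆ W, (∀ e ∈ E, e ⊆ W → ¬ e ⊆ S) ∧ p + k - 1 ≤ S.card) := by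
  have hk0 : 0 < k := by omega
  constructor
  · rintro htc ⟨W, p, ⟨⟨R, hRW, rfl, hcov⟩, -⟩, -, S, hSW, hS, hSc⟩
    have hTC := isTCSet_compl (fun e he heS => hS e he (heS.trans hSW) heS)
      (fun e he => (Finset.mem_filter.mp (hRW he)).1) fun v hv => hcov v (hSW hv)
    have hle := hTC.tcNum_le
    rw [Finset.card_compl] at hle
    have := Finset.card_le_univ S
    omega
  · intro hno
    by_contra htc
    obtain ⟨T₀, R₀, hTR₀, hcard₀⟩ := exists_isTCSet_card_eq_of_uniform hk0 huni hne
    have hub := hcard₀ ▸ hTR₀.tcNum_le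
    have hkn := le_card_of_uniform huni hne
    obtain ⟨T, R, hopt⟩ := exists_isOptimalTCSet ⟨T₀, R₀, hTR₀⟩
    obtain ⟨C, hCE, hCk, hcard⟩ := hopt.exists_sparse_cover (k := k) (by omega)
    exact hno <| exists_induced_of_sparse_cover hCE hCk Finset.sdiff_subset
      (fun e he => not_subset_of_disjoint_transversal hopt.1.1 Finset.sdiff_disjoint he) hcard
end
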